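/- arXiv:2302.00764 — 3 statements merged into one kernel-verified Lean document; each statement's English description precedes it below -/
import Mathlib

section
/- Let p be a rational prime, K an algebraic number field with ring of integers O_K, and a ∈ O_K an element such that p divides the field norm N_{K/ℚ}(a) exactly once (i.e., p ∣ N_{K/ℚ}(a) and p² ∤ N_{K/ℚ}(a)). Then the O_K-ideal 𝔞 = ⟨p, a⟩ generated by p and a is a prime ideal with absolute norm N(𝔞) = p. -/
/-!
The norm of `⟨p, a⟩` divides both `N⟨p⟩ = p ^ [K : ℚ]` and `|N(a)|`, hence divides `p` because
`p ^ 2 ∤ N(a)`. It is not `1`: since `p ∣ N⟨a⟩`, some maximal ideal above `p` divides `⟨a⟩`, and it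
contains both `p` and `a`. An ideal of prime norm is prime.
-/

open NumberField

theorem Nat.dvd_prime_of_dvd_pow_of_not_sq_dvd {p m d n : ℕ} (hp : p.Prime) (hdp : d ∣ p ^ n)
    (hdm : d ∣ m) (hm : ¬ p ^ 2 ∣ m) : d ∣ p := by
  obtain ⟨k, -, rfl⟩ := (Nat.dvd_prime_pow hp).mp hdp
  have hk : k < 2 := by
    by_contra! hk
    exact hm ((pow_dvd_pow p hk).trans hdm)
  interval_cases k <;> simp

namespace Ideal

variable {S : Type*} [CommRing S] [IsDedekindDomain S] [Module.Free ℤ S] [Module.Finite ℤ S]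

theorem span_natCast_pair_ne_top {p : ℕ} (hp : p.Prime) {a : S}
    (h : p ∣ (Algebra.norm ℤ a).natAbs) : span {(p : S), a} ≠ ⊤ := by
  obtain ⟨P, hP, hPp, hPa⟩ :=
    exists_isMaximal_dvd_of_dvd_absNorm' hp (span {a}) (by rwa [absNorm_span_singleton])
  have hpP : (p : S) ∈ P := by
    have : ((p : ℤ) : S) ∈ P := mem_comap.mp (hPp ▸ mem_span_singleton_self _)
    exact_mod_cast this
  have haP : a ∈ P := (span_singleton_le_iff_mem P).mp (le_of_dvd hPa)
  refine ne_top_of_le_ne_top hP.ne_top ?_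
  rw [span_le]
  rintro x (rfl | rfl)
  exacts [hpP, haP]

theorem absNorm_span_natCast_pair {p : ℕ} (hp : p.Prime) {a : S}
    (h1 : p ∣ (Algebra.norm ℤ a).natAbs) (h2 : ¬ p ^ 2 ∣ (Algebra.norm ℤ a).natAbs) :
    absNorm (span {(p : S), a}) = p := by
  have hdvd : absNorm (span {(p : S), a}) ∣ p := by
    refine Nat.dvd_prime_of_dvd_pow_of_not_sq_dvd (n := Module.finrank ℤ S) hp ?_ ?_ h2
    · rw [← absNorm_span_natCast]
      exact absNorm_dvd_absNorm_of_le (span_mono (by simp))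
    · rw [← absNorm_span_singleton]
      exact absNorm_dvd_absNorm_of_le (span_mono (by simp))
  refine (hp.eq_one_or_self_of_dvd _ hdvd).resolve_left ?_
  rw [absNorm_eq_one_iff]
  exact span_natCast_pair_ne_top hp h1

end Ideal

/-- If the rational prime `p` divides the field norm of `a ∈ 𝓞 K` exactly once,
then the ideal `⟨p, a⟩` of `𝓞 K` is prime with absolute norm `p`. -/
theorem stmt_1 (p : ℕ) (hp : p.Prime) (K : Type*) [Field K] [NumberField K]
    (a : 𝓞 K) (h1 : (p : ℤ) ∣ Algebra.norm ℤ a) (h2 : ¬ ((p : ℤ) ^ 2 ∣ Algebra.norm ℤ a)) :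
    (Ideal.span {(p : 𝓞 K), a}).IsPrime ∧
      Ideal.absNorm (Ideal.span {(p : 𝓞 K), a}) = p := by
  have hnorm : Ideal.absNorm (Ideal.span {(p : 𝓞 K), a}) = p :=
    Ideal.absNorm_span_natCast_pair hp (Int.natCast_dvd.mp h1)
      (fun h ↦ h2 (by exact_mod_cast Int.natCast_dvd.mpr h))
  refine ⟨Ideal.isPrime_of_irreducible_absNorm ?_, hnorm⟩
  rw [hnorm]
  exact hp
end

section
/- The polynomial q(x) = x⁶ − 29x⁵ + 322x⁴ − 1714x³ + 4471x² − 5205x + 2026 is irreducible over ℚ, and its discriminant is disc(q) = 2¹⁴ · 3⁶ · 1892022169. -/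
/-!
Modulo 3, `q ≡ (X³ + 2X² + 1)²` with an irreducible cubic, so a monic factor of `q` over `ℤ`
has degree `0`, `3` or `6`. Modulo 5, `q` has no roots but is divisible by the irreducible
quadratic `X² + 3X + 4`, which cannot divide a product of two cubics without producing a root.
Gauss's lemma carries irreducibility from `ℤ` to `ℚ`.

The root-product discriminant of a monic polynomial is `Polynomial.discr`, i.e. `±Res(q, q')`,
and this resultant is evaluated by running the Euclidean algorithm on `q` and `q'` with integral
pseudo-remainders.
-/

open Polynomial

/-- The discriminant of a (monic) integer polynomial `f`, computed in `ℂ` as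
`(-1)^(n(n-1)/2) · ∏_{f(r)=0} f'(r)`, the product running over the roots of `f` in `ℂ`
with multiplicity.  For monic `f` this agrees with the classical polynomial discriminant. -/
noncomputable def polyDisc (f : Polynomial ℤ) : ℂ :=
  (-1) ^ (f.natDegree * (f.natDegree - 1) / 2) *
    (((f.map (Int.castRingHom ℂ)).roots).map
      (fun r => Polynomial.eval r (Polynomial.derivative (f.map (Int.castRingHom ℂ))))).prod

/-- `q(x) = x⁶ − 29x⁵ + 322x⁴ − 1714x³ + 4471x² − 5205x + 2026` over `ℤ`. -/
noncomputable def qZ : Polynomial ℤ :=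
  X ^ 6 - 29 * X ^ 5 + 322 * X ^ 4 - 1714 * X ^ 3 + 4471 * X ^ 2 - 5205 * X + 2026

instance Nat.fact_prime_five : Fact (Nat.Prime 5) := ⟨Nat.prime_five⟩

namespace Polynomial

theorem exists_natDegree_eq_mul_of_dvd_pow {R : Type*} [CommRing R] [IsDomain R] {c d : R[X]}
    {n : ℕ} (hc : Prime c) (hd : d ∣ c ^ n) : ∃ i ≤ n, d.natDegree = i * c.natDegree := by
  obtain ⟨i, hi, hassoc⟩ := (dvd_prime_pow hc n).1 hd
  exact ⟨i, hi, by rw [natDegree_eq_of_degree_eq (degree_eq_degree_of_associated hassoc),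
    natDegree_pow]⟩

theorem exists_isRoot_of_dvd_of_natDegree_eq_add_one {K : Type*} [Field K] {c a : K[X]}
    (hca : c ∣ a) (ha : a.natDegree = c.natDegree + 1) : ∃ x, a.IsRoot x := by
  obtain ⟨e, rfl⟩ := hca
  have he : e.natDegree = 1 := by
    have hce : c * e ≠ 0 := fun h ↦ by simp [h] at ha
    rw [natDegree_mul (left_ne_zero_of_mul hce) (right_ne_zero_of_mul hce)] at ha
    omega
  obtain ⟨x, hx⟩ :=
    exists_root_of_degree_eq_one ((degree_eq_iff_natDegree_eq_of_pos one_pos).2 he)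
  exact ⟨x, root_mul_left_of_isRoot c hx⟩

theorem exists_isRoot_of_irreducible_quadratic_dvd_mul {K : Type*} [Field K] {a b c : K[X]}
    (hc : Irreducible c) (hc2 : c.natDegree = 2) (hcab : c ∣ a * b) (ha : a.natDegree = 3)
    (hb : b.natDegree = 3) : ∃ x, (a * b).IsRoot x := by
  rcases hc.prime.dvd_or_dvd hcab with hca | hcb
  · obtain ⟨x, hx⟩ := exists_isRoot_of_dvd_of_natDegree_eq_add_one hca (by omega)
    exact ⟨x, root_mul_right_of_isRoot b hx⟩
  · obtain ⟨x, hx⟩ := exists_isRoot_of_dvd_of_natDegree_eq_add_one hcb (by omega)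
    exact ⟨x, root_mul_left_of_isRoot a hx⟩

theorem resultant_eq_of_C_mul_eq_add_mul {R : Type*} [CommRing R] {f g p r : R[X]} {a c : R}
    {m n k : ℕ} (h : C a * f = C c * r + g * p) (hnm : n ≤ m) (hp : p.natDegree ≤ m - n)
    (hg : g.natDegree ≤ n) (hr : r.natDegree ≤ k) (hk : k ≤ m) :
    a ^ n * resultant f g m n =
      c ^ n * (-1) ^ (m * n) * g.coeff n ^ (m - k) * resultant g r n k := by
  obtain ⟨j, rfl⟩ := Nat.exists_eq_add_of_le hk
  rw [← resultant_C_mul_left, h, resultant_add_mul_left _ _ _ _ _ (by omega) hg,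
    resultant_C_mul_left, resultant_add_left_deg _ _ _ _ _ hr, resultant_comm,
    Nat.add_sub_cancel_left]
  ring

theorem polyDisc_eq_discr {f : ℤ[X]} (hf : f.Monic) (hdeg : 0 < f.natDegree) :
    polyDisc f = f.discr := by
  set φ := Int.castRingHom ℂ
  have hmap : (f.map φ).natDegree = f.natDegree := hf.natDegree_map φ
  have hres := resultant_eq_prod_eval (f.map φ) (derivative (f.map φ)) (f.natDegree - 1)
    (by rw [← hmap]; exact natDegree_derivative_le _) (IsAlgClosed.splits _)
  rw [hmap, (hf.map φ).leadingCoeff, one_pow, one_mul, derivative_map, resultant_map_map,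
    resultant_deriv (natDegree_pos_iff_degree_pos.mp hdeg), hf.leadingCoeff, mul_one] at hres
  rw [polyDisc, derivative_map, ← hres, map_mul, map_pow, map_neg, map_one, ← mul_assoc,
    ← mul_pow, neg_one_mul, neg_neg, one_pow, one_mul]
  rfl

end Polynomial

theorem qZ_natDegree : qZ.natDegree = 6 := by unfold qZ; compute_degree!

theorem qZ_monic : qZ.Monic := by unfold qZ; monicity!

theorem derivative_qZ :
    derivative qZ = 6 * X ^ 5 - 145 * X ^ 4 + 1288 * X ^ 3 - 5142 * X ^ 2 + 8942 * X - 5205 := by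
  simp only [qZ, derivative_add, derivative_sub, derivative_mul, derivative_X_pow,
    derivative_ofNat, derivative_X, map_ofNat, Nat.cast_ofNat]
  ring

theorem map_qZ_zmod_three :
    qZ.map (Int.castRingHom (ZMod 3)) = (X ^ 3 + 2 * X ^ 2 + 1) ^ 2 := by
  have h3 : (3 : (ZMod 3)[X]) = 0 := CharP.ofNat_eq_zero _ 3
  simp only [qZ, Polynomial.map_add, Polynomial.map_sub, Polynomial.map_mul, Polynomial.map_pow,
    map_X, Polynomial.map_ofNat]
  linear_combination
    (-11 * X ^ 5 + 106 * X ^ 4 - 572 * X ^ 3 + 1489 * X ^ 2 - 1735 * X + 675) * h3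

theorem map_qZ_zmod_five :
    qZ.map (Int.castRingHom (ZMod 5)) =
      (X ^ 2 + 3 * X + 4) * (X ^ 4 + 3 * X ^ 3 + 4 * X ^ 2 + 2 * X + 4) := by
  have h5 : (5 : (ZMod 5)[X]) = 0 := CharP.ofNat_eq_zero _ 5
  simp only [qZ, Polynomial.map_add, Polynomial.map_sub, Polynomial.map_mul, Polynomial.map_pow,
    map_X, Polynomial.map_ofNat]
  linear_combination (-7 * X ^ 5 + 61 * X ^ 4 - 348 * X ^ 3 + 889 * X ^ 2 - 1045 * X + 402) * h5

theorem irreducible_zmod_three : Irreducible (X ^ 3 + 2 * X ^ 2 + 1 : (ZMod 3)[X]) := by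
  have hdeg : (X ^ 3 + 2 * X ^ 2 + 1 : (ZMod 3)[X]).natDegree = 3 := by compute_degree!
  refine irreducible_of_degree_le_three_of_not_isRoot (by rw [hdeg]; decide) ?_
  simp only [IsRoot, eval_add, eval_mul, eval_pow, eval_X, eval_one, eval_ofNat]
  decide

theorem irreducible_zmod_five : Irreducible (X ^ 2 + 3 * X + 4 : (ZMod 5)[X]) := by
  have hdeg : (X ^ 2 + 3 * X + 4 : (ZMod 5)[X]).natDegree = 2 := by compute_degree!
  refine irreducible_of_degree_le_three_of_not_isRoot (by rw [hdeg]; decide) ?_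
  simp only [IsRoot, eval_add, eval_mul, eval_pow, eval_X, eval_ofNat]
  decide

theorem not_isRoot_map_qZ_zmod_five (x : ZMod 5) :
    ¬ (qZ.map (Int.castRingHom (ZMod 5))).IsRoot x := by
  rw [map_qZ_zmod_five]
  simp only [IsRoot, eval_add, eval_mul, eval_pow, eval_X, eval_ofNat]
  revert x
  decide

theorem irreducible_qZ : Irreducible qZ := by
  refine qZ_monic.irreducible_iff_natDegree'.2 ⟨fun h ↦ by simpa [h] using qZ_natDegree, ?_⟩
  intro f g hf hg hfg hdeg
  rw [qZ_natDegree, Finset.mem_Ioc] at hdeg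
  have hsum : f.natDegree + g.natDegree = 6 := by rw [← hf.natDegree_mul hg, hfg, qZ_natDegree]
  have hg3 : g.natDegree = 3 := by
    have hdvd : g.map (Int.castRingHom (ZMod 3)) ∣ (X ^ 3 + 2 * X ^ 2 + 1) ^ 2 := by
      rw [← map_qZ_zmod_three, ← hfg, Polynomial.map_mul]
      exact dvd_mul_left _ _
    obtain ⟨i, hi, hdeg3⟩ :=
      exists_natDegree_eq_mul_of_dvd_pow irreducible_zmod_three.prime hdvd
    rw [hg.natDegree_map, show (X ^ 3 + 2 * X ^ 2 + 1 : (ZMod 3)[X]).natDegree = 3 by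
      compute_degree!] at hdeg3
    interval_cases i <;> omega
  have hdvd : (X ^ 2 + 3 * X + 4 : (ZMod 5)[X]) ∣
      f.map (Int.castRingHom (ZMod 5)) * g.map (Int.castRingHom (ZMod 5)) := by
    rw [← Polynomial.map_mul, hfg, map_qZ_zmod_five]
    exact dvd_mul_right _ _
  obtain ⟨x, hx⟩ := exists_isRoot_of_irreducible_quadratic_dvd_mul irreducible_zmod_five
    (by compute_degree!) hdvd (by rw [hf.natDegree_map]; omega) (by rw [hg.natDegree_map]; omega)
  rw [← Polynomial.map_mul, hfg] at hx
  exact not_isRoot_map_qZ_zmod_five x hx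

-- The Euclidean remainder sequence of `q` and `q'`, scaled at each step to be integral
-- and primitive.
theorem resultant_qZ_derivative :
    resultant qZ (derivative qZ) 6 5 = -(2 ^ 14 * 3 ^ 6 * 1892022169) := by
  have h₁ := resultant_eq_of_C_mul_eq_add_mul (m := 6) (n := 5) (k := 4) (a := 36) (c := -1)
    (f := qZ) (g := 6 * X ^ 5 - 145 * X ^ 4 + 1288 * X ^ 3 - 5142 * X ^ 2 + 8942 * X - 5205)
    (p := 6 * X - 29) (r := 341 * X ^ 4 - 6500 * X ^ 3 + 41814 * X ^ 2 - 103168 * X + 78009)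
    (by rw [qZ]; simp only [map_ofNat, map_neg, map_one]; ring)
    (by norm_num) (by compute_degree!) (by compute_degree!) (by compute_degree!) (by norm_num)
  have h₂ := resultant_eq_of_C_mul_eq_add_mul (m := 5) (n := 4) (k := 3) (a := 116281) (c := -72)
    (f := 6 * X ^ 5 - 145 * X ^ 4 + 1288 * X ^ 3 - 5142 * X ^ 2 + 8942 * X - 5205)
    (g := 341 * X ^ 4 - 6500 * X ^ 3 + 41814 * X ^ 2 - 103168 * X + 78009)
    (p := 2046 * X - 10445) (r := 51028 * X ^ 3 - 693223 * X ^ 2 + 2741826 * X - 2910575)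
    (by simp only [map_ofNat, map_neg]; ring)
    (by norm_num) (by compute_degree!) (by compute_degree!) (by compute_degree!) (by norm_num)
  have h₃ := resultant_eq_of_C_mul_eq_add_mul (m := 4) (n := 3) (k := 2) (a := 2603856784)
    (c := -1046529) (f := 341 * X ^ 4 - 6500 * X ^ 3 + 41814 * X ^ 2 - 103168 * X + 78009)
    (g := 51028 * X ^ 3 - 693223 * X ^ 2 + 2741826 * X - 2910575)
    (p := 17400548 * X - 95292957) (r := 4673427 * X ^ 2 - 41363030 * X + 70932611)
    (by simp only [map_ofNat, map_neg]; ring)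
    (by norm_num) (by compute_degree!) (by compute_degree!) (by compute_degree!) (by norm_num)
  have h₄ := resultant_eq_of_C_mul_eq_add_mul (m := 3) (n := 2) (k := 1) (a := 21840919924329)
    (c := -10415427136) (f := 51028 * X ^ 3 - 693223 * X ^ 2 + 2741826 * X - 2910575)
    (g := 4673427 * X ^ 2 - 41363030 * X + 70932611)
    (p := 238475632956 * X - 1129054390381) (r := 358392197 * X - 1585834181)
    (by simp only [map_ofNat, map_neg]; ring)
    (by norm_num) (by compute_degree!) (by compute_degree!) (by compute_degree!) (by norm_num)
  have h₅ := resultant_eq_of_C_mul_eq_add_mul (m := 2) (n := 1) (k := 0)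
    (a := 128444966870486809) (c := -2644704300043793308774464)
    (f := 4673427 * X ^ 2 - 41363030 * X + 70932611) (g := 358392197 * X - 1585834181)
    (p := 1674919770049119 * X - 7412906917268623) (r := 1)
    (by simp only [map_ofNat, map_neg]; ring)
    (by norm_num) (by compute_degree!) (by compute_degree!) (by compute_degree!) (by norm_num)
  norm_num [coeff_X, coeff_X_pow] at h₁ h₂ h₃ h₄ h₅
  rw [derivative_qZ]
  linarith

theorem discr_qZ : qZ.discr = 2 ^ 14 * 3 ^ 6 * 1892022169 := by
  have h := resultant_deriv (f := qZ)
    (by rw [← natDegree_pos_iff_degree_pos, qZ_natDegree]; norm_num)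
  rw [qZ_natDegree, qZ_monic.leadingCoeff, resultant_qZ_derivative] at h
  norm_num at h
  linarith

/-- `q` is irreducible over `ℚ` and `disc q = 2¹⁴ · 3⁶ · 1892022169`. -/
theorem stmt_4 :
    Irreducible (qZ.map (Int.castRingHom ℚ)) ∧
      polyDisc qZ = ((2 ^ 14 * 3 ^ 6 * 1892022169 : ℤ) : ℂ) := by
  refine ⟨(IsPrimitive.Int.irreducible_iff_irreducible_map_cast qZ_monic.isPrimitive).1
    irreducible_qZ, ?_⟩
  rw [polyDisc_eq_discr qZ_monic (by rw [qZ_natDegree]; norm_num), discr_qZ]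
end

section
/- Let a be a root of q₇(x) = x⁷ − 30x⁶ + 357x⁵ − 2157x⁴ + 7034x³ − 12145x² + 9964x − 2832, K = ℚ(a), and set w = 134943/2 − (1626701/8)a + (6689239/32)a² − (2996715/32)a³ + (80271/4)a⁴ − (64895/32)a⁵ + (2479/32)a⁶. Then w is an algebraic integer (lies in O_K), its field norm is N_{K/ℚ}(w) = −2⁷ · 3 · 3919 · 1941571 · 8583739212883, and the O_K-ideal ⟨3, w⟩ equals the prime ideal ⟨3, a⟩ of absolute norm 3. -/
/-!
The element `w` is a root of the monic integer polynomial `wMinpoly`, which is irreducible because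
its reduction mod 7 has no irreducible factor of degree at most 3 (it is coprime to `X ^ 7 ^ 2 - X`
and `X ^ 7 ^ 3 - X`). So `w` is integral and has degree 7 over `ℚ`, while `K = ℚ(a)` has degree at
most 7; hence `[K : ℚ] = 7`, `q₇` is the minimal polynomial of `a`, and both norms are read off
constant coefficients.

Since `64 • w ∈ ℤ[a]` and `64 ≡ 1 (mod 3)`, the ideals `⟨3, w⟩` and `⟨3, a⟩` coincide. The absolute
norm of `⟨3, a⟩` divides `N(3) = 3⁷` and `N(a) = 2832 = 2⁴ · 3 · 59`, and it is not `1`, because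
`N(1 + 3x) ≡ 1 (mod 3)` while `3 ∣ N(a)`. So it is the prime `3`, and the ideal is prime.
-/

open Polynomial Module NumberField

theorem Polynomial.dvd_X_pow_sub_of_add_eq {R : Type*} [CommRing R] {f a b c : R[X]}
    {m n k : ℕ} (hm : f ∣ X ^ m - a) (hn : f ∣ X ^ n - b) (hc : f ∣ a * b - c) (hk : m + n = k) :
    f ∣ X ^ k - c := by
  subst hk
  have : (X : R[X]) ^ (m + n) - c = (X ^ m - a) * X ^ n + a * (X ^ n - b) + (a * b - c) := by ring
  rw [this]
  exact dvd_add (dvd_add (dvd_mul_of_dvd_left hm _) (dvd_mul_of_dvd_right hn _)) hc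

theorem IsCoprime.of_dvd_sub {R : Type*} [CommRing R] {f r x y : R} (h : IsCoprime f (r - y))
    (hd : f ∣ x - r) : IsCoprime f (x - y) := by
  obtain ⟨k, hk⟩ := hd
  rw [show x - y = r - y + f * k by rw [← hk]; ring]
  exact h.add_mul_left_right k

theorem Polynomial.Monic.irreducible_of_isCoprime_X_pow_card_pow_sub_X {F : Type*} [CommRing F]
    [IsDomain F] [Finite F] {f : F[X]} (hf : f.Monic) (hf1 : f ≠ 1)
    (h : ∀ d ∈ Finset.Ioc 0 (f.natDegree / 2),
      ∃ k, d ∣ k ∧ IsCoprime f (X ^ Nat.card F ^ k - X)) :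
    Irreducible f := by
  have := Fintype.ofFinite F
  classical
  let := Fintype.fieldOfDomain F
  refine (hf.irreducible_iff_lt_natDegree_lt hf1).2 fun q hq hdeg hqf => ?_
  obtain ⟨hq0, hqdeg⟩ := Finset.mem_Ioc.1 hdeg
  obtain ⟨π, -, hπ, hπq⟩ := exists_monic_irreducible_factor q (not_isUnit_of_natDegree_pos q hq0)
  obtain ⟨k, hk, hcop⟩ := h π.natDegree <| Finset.mem_Ioc.2
    ⟨hπ.natDegree_pos, (natDegree_le_of_dvd hπq hq.ne_zero).trans hqdeg⟩
  exact hπ.not_isUnit <| hcop.isUnit_of_dvd' (hπq.trans hqf)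
    (hπ.natDegree_dvd_iff_dvd_X_pow_card_pow_sub_X.1 hk)

section FieldExtension

variable {K L : Type*} [Field K] [Field L] [Algebra K L] {x : L}

theorem Algebra.adjoin_eq_top_of_natDegree_minpoly_eq_finrank [FiniteDimensional K L]
    (h : (minpoly K x).natDegree = finrank K L) : Algebra.adjoin K {x} = ⊤ := by
  rw [← IntermediateField.adjoin_simple_toSubalgebra_of_isAlgebraic
    (Algebra.IsIntegral.isIntegral x).isAlgebraic,
    (Field.primitive_element_iff_minpoly_natDegree_eq K x).2 h, IntermediateField.top_toSubalgebra]

theorem Algebra.norm_eq_coeff_zero_minpoly_of_adjoin_eq_top (hx : IsIntegral K x)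
    (hgen : Algebra.adjoin K {x} = ⊤) :
    Algebra.norm K x = (-1) ^ (minpoly K x).natDegree * (minpoly K x).coeff 0 :=
  Algebra.PowerBasis.norm_gen_eq_coeff_zero_minpoly (PowerBasis.ofAdjoinEqTop hx hgen)

theorem finrank_le_natDegree_of_adjoin_eq_top {p : K[X]} (hp : p ≠ 0) (hx : aeval x p = 0)
    (hgen : Algebra.adjoin K {x} = ⊤) : finrank K L ≤ p.natDegree := by
  rw [(PowerBasis.ofAdjoinEqTop (IsAlgebraic.isIntegral ⟨p, hp, hx⟩) hgen).finrank]
  exact natDegree_le_of_dvd (minpoly.dvd K x hx) hp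

theorem minpoly_eq_of_adjoin_eq_top {p : K[X]} (hp : p.Monic) (hx : aeval x p = 0)
    (hgen : Algebra.adjoin K {x} = ⊤) (hdeg : p.natDegree ≤ finrank K L) : minpoly K x = p := by
  have hint : IsIntegral K x := ⟨p, hp, hx⟩
  refine (eq_of_monic_of_dvd_of_natDegree_le (minpoly.monic hint) hp (minpoly.dvd K x hx) ?_).symm
  rwa [(PowerBasis.ofAdjoinEqTop hint hgen).finrank] at hdeg

end FieldExtension

theorem Ideal.span_pair_eq_of_mem {R : Type*} [CommSemiring R] {p x y : R}
    (hx : x ∈ Ideal.span {p, y}) (hy : y ∈ Ideal.span {p, x}) :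
    Ideal.span {p, x} = Ideal.span {p, y} := by
  refine le_antisymm (Ideal.span_le.2 ?_) (Ideal.span_le.2 ?_) <;>
    refine Set.insert_subset (Ideal.subset_span (Set.mem_insert _ _)) ?_ <;>
    simpa

theorem Ideal.span_pair_ne_top_of_dvd_norm {A S : Type*} [CommRing A] [CommRing S] [Algebra A S]
    [Module.Free A S] [Module.Finite A S] {p : A} (hp : ¬IsUnit p) {a : S}
    (ha : p ∣ Algebra.norm A a) : Ideal.span {algebraMap A S p, a} ≠ ⊤ := by
  intro htop
  obtain ⟨x, y, hxy⟩ := Ideal.mem_span_pair.1 (htop ▸ Submodule.mem_top : (1 : S) ∈ _)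
  obtain ⟨r, hr⟩ := Algebra.norm_one_add_smul p (-x)
  obtain ⟨c, hc⟩ := ha
  have hya : y * a = 1 + p • -x := by rw [Algebra.smul_def]; linear_combination hxy
  rw [← hya, map_mul] at hr
  exact hp (isUnit_of_dvd_one ⟨Algebra.norm A y * c - Algebra.trace A S (-x) - r * p, by
    linear_combination Algebra.norm A y * hc - hr⟩)

theorem Ideal.absNorm_span_pair_eq_of_dvd_norm {S : Type*} [CommRing S] [IsDedekindDomain S]
    [Module.Free ℤ S] [Module.Finite ℤ S] {p : ℕ} (hp : p.Prime) {a : S}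
    (hdvd : (p : ℤ) ∣ Algebra.norm ℤ a) (hsq : ¬(p : ℤ) ^ 2 ∣ Algebra.norm ℤ a) :
    Ideal.absNorm (Ideal.span {(p : S), a}) = p := by
  set I := Ideal.span {(p : S), a}
  have hpow : Ideal.absNorm I ∣ p ^ finrank ℤ S := by
    rw [← Ideal.absNorm_span_natCast]
    exact Ideal.absNorm_dvd_absNorm_of_le (Ideal.span_mono (by simp))
  obtain ⟨k, -, hk⟩ := (Nat.dvd_prime_pow hp).1 hpow
  have hne : I ≠ ⊤ := by
    simpa [I] using Ideal.span_pair_ne_top_of_dvd_norm (A := ℤ)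
      (by simpa [Int.isUnit_iff_natAbs_eq] using hp.ne_one) hdvd
  have hk1 : k ≤ 1 := by
    by_contra! hk1
    have := Ideal.absNorm_dvd_norm_of_mem (Ideal.subset_span (by simp) : a ∈ I)
    rw [hk] at this
    exact hsq ((pow_dvd_pow _ hk1).trans (by exact_mod_cast this))
  interval_cases k
  · exact absurd (Ideal.absNorm_eq_one_iff.1 (by simpa using hk)) hne
  · simpa using hk

noncomputable def q7 : ℤ[X] :=
  X ^ 7 - 30 * X ^ 6 + 357 * X ^ 5 - 2157 * X ^ 4 + 7034 * X ^ 3 - 12145 * X ^ 2 + 9964 * X - 2832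

noncomputable def wMinpoly : ℤ[X] :=
  X ^ 7 + 2942 * X ^ 6 - 86997036 * X ^ 5 - 19774301384 * X ^ 4 + 2284807851123760 * X ^ 3 -
    3492108736160776544 * X ^ 2 - 12424324733345159652928 * X + 25080505128911932253708928

noncomputable def wMinpolyMod7 : (ZMod 7)[X] :=
  X ^ 7 + 2 * X ^ 6 + 2 * X ^ 4 + 4 * X ^ 3 + 6 * X ^ 2 + 6 * X + 4

theorem q7_monic : q7.Monic := by unfold q7; monicity!

theorem q7_natDegree : q7.natDegree = 7 := by unfold q7; compute_degree!

theorem wMinpoly_monic : wMinpoly.Monic := by unfold wMinpoly; monicity!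

theorem wMinpoly_natDegree : wMinpoly.natDegree = 7 := by unfold wMinpoly; compute_degree!

theorem wMinpolyMod7_monic : wMinpolyMod7.Monic := by unfold wMinpolyMod7; monicity!

theorem wMinpolyMod7_natDegree : wMinpolyMod7.natDegree = 7 := by
  unfold wMinpolyMod7; compute_degree!

theorem wMinpoly_map_zmod7 : wMinpoly.map (Int.castRingHom (ZMod 7)) = wMinpolyMod7 := by
  simp only [wMinpoly, wMinpolyMod7, Polynomial.map_add, Polynomial.map_sub, Polynomial.map_mul,
    Polynomial.map_pow, Polynomial.map_X, Polynomial.map_ofNat]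
  reduce_mod_char

theorem wMinpolyMod7_dvd_X_pow_49_sub :
    wMinpolyMod7 ∣ X ^ 49 - (2 * X ^ 6 + 4 * X ^ 5 + 6 * X ^ 4 + 3 * X ^ 2 + X) := by
  have h7 : wMinpolyMod7 ∣ X ^ 7 - (5 * X ^ 6 + 5 * X ^ 4 + 3 * X ^ 3 + X ^ 2 + X + 3) :=
    ⟨1, by unfold wMinpolyMod7; linear_combination (norm := ring_nf); reduce_mod_char⟩
  have h14 : wMinpolyMod7 ∣ X ^ 14 -
      (6 * X ^ 6 + 2 * X ^ 5 + 4 * X ^ 4 + 2 * X ^ 3 + 3 * X ^ 2 + 2 * X + 5) :=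
    dvd_X_pow_sub_of_add_eq h7 h7 ⟨4 * X ^ 5 + 6 * X ^ 4 + 3 * X ^ 3 + 2 * X ^ 2 + 3 * X + 1,
      by unfold wMinpolyMod7; linear_combination (norm := ring_nf); reduce_mod_char⟩ rfl
  have h28 : wMinpolyMod7 ∣ X ^ 28 - (3 * X ^ 6 + X ^ 5 + 3 * X ^ 4 + X ^ 3 + 4 * X ^ 2 + 1) :=
    dvd_X_pow_sub_of_add_eq h14 h14 ⟨X ^ 5 + X ^ 4 + X ^ 3 + X ^ 2 + 3 * X + 6,
      by unfold wMinpolyMod7; linear_combination (norm := ring_nf); reduce_mod_char⟩ rfl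
  have h42 : wMinpolyMod7 ∣ X ^ 42 - (6 * X ^ 6 + 3 * X ^ 4 + 5 * X ^ 2 + 6 * X + 6) :=
    dvd_X_pow_sub_of_add_eq h28 h14 ⟨4 * X ^ 5 + 4 * X ^ 4 + 3 * X ^ 3 + X ^ 2 + 2 * X + 5,
      by unfold wMinpolyMod7; linear_combination (norm := ring_nf); reduce_mod_char⟩ rfl
  exact dvd_X_pow_sub_of_add_eq h42 h7 ⟨2 * X ^ 5 + 3 * X ^ 4 + 4 * X ^ 3 + 6 * X ^ 2 + 6 * X + 1,
    by unfold wMinpolyMod7; linear_combination (norm := ring_nf); reduce_mod_char⟩ rfl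

theorem wMinpolyMod7_dvd_X_pow_343_sub :
    wMinpolyMod7 ∣ X ^ 343 - (2 * X ^ 6 + 2 * X ^ 5 + 5 * X ^ 4 + 2 * X ^ 3 + 5) := by
  have h49 := wMinpolyMod7_dvd_X_pow_49_sub
  have h98 : wMinpolyMod7 ∣ X ^ 98 -
      (4 * X ^ 6 + 3 * X ^ 5 + 5 * X ^ 4 + 4 * X ^ 3 + 2 * X ^ 2 + 5 * X) :=
    dvd_X_pow_sub_of_add_eq h49 h49 ⟨4 * X ^ 5 + X ^ 4 + 3 * X ^ 3 + 6 * X ^ 2 + 4 * X,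
      by unfold wMinpolyMod7; linear_combination (norm := ring_nf); reduce_mod_char⟩ rfl
  have h196 : wMinpolyMod7 ∣ X ^ 196 - (X ^ 6 + 4 * X ^ 5 + 5 * X ^ 3 + X ^ 2 + 3 * X + 2) :=
    dvd_X_pow_sub_of_add_eq h98 h98 ⟨2 * X ^ 5 + 6 * X ^ 4 + 2 * X ^ 3 + 5 * X ^ 2 + 3,
      by unfold wMinpolyMod7; linear_combination (norm := ring_nf); reduce_mod_char⟩ rfl
  have h294 : wMinpolyMod7 ∣ X ^ 294 - (6 * X ^ 5 + 3 * X ^ 3 + 3 * X + 4) :=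
    dvd_X_pow_sub_of_add_eq h196 h98
      ⟨4 * X ^ 5 + 4 * X ^ 4 + 2 * X ^ 3 + 4 * X ^ 2 + 5 * X + 6,
      by unfold wMinpolyMod7; linear_combination (norm := ring_nf); reduce_mod_char⟩ rfl
  exact dvd_X_pow_sub_of_add_eq h294 h49 ⟨5 * X ^ 4 + 2 * X + 4,
    by unfold wMinpolyMod7; linear_combination (norm := ring_nf); reduce_mod_char⟩ rfl

theorem isCoprime_wMinpolyMod7_X_pow_49_sub_X : IsCoprime wMinpolyMod7 (X ^ 49 - X) :=
  IsCoprime.of_dvd_sub ⟨6 * X ^ 5 + 3 * X ^ 4 + 6 * X ^ 3 + 2 * X ^ 2 + 4 * X + 2,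
    4 * X ^ 6 + 2 * X ^ 5 + 6 * X ^ 4 + 4 * X ^ 3 + 5 * X ^ 2 + 3 * X + 4,
    by unfold wMinpolyMod7; linear_combination (norm := ring_nf); reduce_mod_char⟩
    wMinpolyMod7_dvd_X_pow_49_sub

theorem isCoprime_wMinpolyMod7_X_pow_343_sub_X : IsCoprime wMinpolyMod7 (X ^ 343 - X) :=
  IsCoprime.of_dvd_sub ⟨4 * X ^ 5 + 5 * X ^ 4 + 6 * X ^ 3 + X ^ 2 + 1,
    5 * X ^ 6 + 6 * X ^ 5 + 5 * X ^ 4 + 3 * X ^ 3 + 3 * X ^ 2 + 4 * X + 5,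
    by unfold wMinpolyMod7; linear_combination (norm := ring_nf); reduce_mod_char⟩
    wMinpolyMod7_dvd_X_pow_343_sub

theorem irreducible_wMinpolyMod7 : Irreducible wMinpolyMod7 := by
  have h2 : IsCoprime wMinpolyMod7 (X ^ 7 ^ 2 - X) := by
    rw [show 7 ^ 2 = 49 from rfl]; exact isCoprime_wMinpolyMod7_X_pow_49_sub_X
  have h3 : IsCoprime wMinpolyMod7 (X ^ 7 ^ 3 - X) := by
    rw [show 7 ^ 3 = 343 from rfl]; exact isCoprime_wMinpolyMod7_X_pow_343_sub_X
  -- Only now: with `Fact` in scope, `(ZMod 7)[X]` picks up the instances of the field `ZMod 7`,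
  -- and matching `X ^ 343` across the two instance paths unfolds the power.
  have : Fact (Nat.Prime 7) := ⟨by norm_num⟩
  refine wMinpolyMod7_monic.irreducible_of_isCoprime_X_pow_card_pow_sub_X
    (by rintro h; simpa [h] using wMinpolyMod7_natDegree) fun d hd => ?_
  rw [wMinpolyMod7_natDegree, Finset.mem_Ioc] at hd
  rw [Nat.card_zmod]
  obtain ⟨hd0, hd3⟩ := hd
  interval_cases d
  exacts [⟨2, one_dvd _, h2⟩, ⟨2, dvd_rfl, h2⟩, ⟨3, dvd_rfl, h3⟩]

theorem irreducible_wMinpoly_map_rat : Irreducible (wMinpoly.map (algebraMap ℤ ℚ)) :=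
  have : Fact (Nat.Prime 7) := ⟨by norm_num⟩
  (IsPrimitive.Int.irreducible_iff_irreducible_map_cast wMinpoly_monic.isPrimitive).1 <|
    wMinpoly_monic.irreducible_of_irreducible_map (Int.castRingHom (ZMod 7)) _
      (wMinpoly_map_zmod7 ▸ irreducible_wMinpolyMod7)

theorem aeval_wMinpoly_eq_zero {L : Type*} [Field L] [CharZero L] {α w : L}
    (hα : aeval α q7 = 0)
    (hw : w = 134943/2 - 1626701/8 * α + 6689239/32 * α^2 - 2996715/32 * α^3 +
      80271/4 * α^4 - 64895/32 * α^5 + 2479/32 * α^6) :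
    aeval w wMinpoly = 0 := by
  simp only [q7, wMinpoly, map_add, map_sub, map_mul, map_pow, map_ofNat, aeval_X] at hα ⊢
  rw [hw]
  -- the cofactor is the quotient of `wMinpoly (w(X))` by `q₇` in `ℚ[X]`
  linear_combination
    (-(4716358213655873928977222796100795/2048) + (165646849817381851103090129656011381/4096) * α
      - (11006829103554167580344081253371176823/32768) * α ^ 2
      + (115178348725862385132512813401684703791/65536) * α ^ 3
      - (1706175057061932110595111018290356525255/262144) * α ^ 4
      + (19057171524996501169334408887327107919567/1048576) * α ^ 5
      - (333923054234662105908294633906040650603231/8388608) * α ^ 6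
      + (1178485103135519385088621042479126775835221/16777216) * α ^ 7
      - (6831491250235989659230681673170758905619239/67108864) * α ^ 8
      + (32991524446939531967519965154715389234042289/268435456) * α ^ 9
      - (268398020233787138648733736158927526982709911/2147483648) * α ^ 10
      + (463755793518387693797218299870902251838230945/4294967296) * α ^ 11
      - (2741709774624339242003384271055925850850394987/34359738368) * α ^ 12
      + (1742641013529268206421874379024601919966106643/34359738368) * α ^ 13
      - (478435301745928594377781879518430640051003091/17179869184) * α ^ 14
      + (14234233806704577480727048541408151476366109/1073741824) * α ^ 15
      - (188491554190294960181541652399035689735215345/34359738368) * α ^ 16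
      + (67946183938136306788847088986131239544890235/34359738368) * α ^ 17
      - (21365157225505127019949660803398241032281377/34359738368) * α ^ 18
      + (5864570903459206069536816084232948944746031/34359738368) * α ^ 19
      - (351341377852490116206321618931637533849281/8589934592) * α ^ 20
      + (146914443024667706821800612902082934965011/17179869184) * α ^ 21
      - (53523904832586729922935276525482869208981/34359738368) * α ^ 22
      + (8475571902255933972823620680594911801585/34359738368) * α ^ 23
      - (1162895507316196772275259612359484236589/34359738368) * α ^ 24
      + (137632739538783253628463741685032104249/34359738368) * α ^ 25
      - (6983847954067969280738948130611828131/17179869184) * α ^ 26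
      + (301493681655721486442243926526696597/8589934592) * α ^ 27
      - (87672139226573888067267467549679155/34359738368) * α ^ 28
      + (5292924941481059407704410972677085/34359738368) * α ^ 29
      - (260420718660589820285200278688743/34359738368) * α ^ 30
      + (10169732636451862035926123371717/34359738368) * α ^ 31
      - (18942992034873648201922881187/2147483648) * α ^ 32
      + (3236332809980314809135931779/17179869184) * α ^ 33
      - (88170385214333966535862295/34359738368) * α ^ 34
      + (575354729455070224778959/34359738368) * α ^ 35) * hα

theorem span_three_eq_of_sixtyFour_mul_eq {R : Type*} [CommRing R] {a w : R}
    (ha : a ^ 7 - 30 * a ^ 6 + 357 * a ^ 5 - 2157 * a ^ 4 + 7034 * a ^ 3 - 12145 * a ^ 2 +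
      9964 * a - 2832 = 0)
    (hw : 64 * w = 4318176 - 13013608 * a + 13378478 * a ^ 2 - 5993430 * a ^ 3 +
      1284336 * a ^ 4 - 129790 * a ^ 5 + 4958 * a ^ 6) :
    Ideal.span {(3 : R), w} = Ideal.span {(3 : R), a} := by
  refine Ideal.span_pair_eq_of_mem (Ideal.mem_span_pair.2 ⟨1439392 - 21 * w, 2 * (-6506804 +
    6689239 * a - 2996715 * a ^ 2 + 642168 * a ^ 3 - 64895 * a ^ 4 + 2479 * a ^ 5), ?_⟩)
    (Ideal.mem_span_pair.2 ⟨-(2 * (2385332032 - 7973620144 * a + 8840634636 * a ^ 2 -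
      4405201372 * a ^ 3 + 1073449056 * a ^ 4 - 123116524 * a ^ 5 + 5254828 * a ^ 6)) - 21 * a,
      64 * (2 + a + a ^ 2 + 2 * a ^ 3 + 2 * a ^ 5), ?_⟩)
  · linear_combination -hw
  · linear_combination (2 + a + a ^ 2 + 2 * a ^ 3 + 2 * a ^ 5) * hw +
      2 * (2525310 + 442155 * a + 87788 * a ^ 2 + 18950 * a ^ 3 + 4958 * a ^ 4) * ha

section NumberField

variable {K : Type*} [Field K] [NumberField K] {α w : K}

theorem minpoly_eq_wMinpoly (hw : aeval w wMinpoly = 0) :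
    minpoly ℚ w = wMinpoly.map (algebraMap ℤ ℚ) :=
  (minpoly.eq_of_irreducible_of_monic irreducible_wMinpoly_map_rat
    (by rwa [aeval_map_algebraMap]) (wMinpoly_monic.map _)).symm

theorem natDegree_minpoly_eq_seven (hw : aeval w wMinpoly = 0) : (minpoly ℚ w).natDegree = 7 := by
  rw [minpoly_eq_wMinpoly hw, wMinpoly_monic.natDegree_map, wMinpoly_natDegree]

theorem finrank_eq_seven (hα : aeval α q7 = 0) (hgen : Algebra.adjoin ℚ {α} = ⊤)
    (hw : aeval w wMinpoly = 0) : finrank ℚ K = 7 := by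
  refine le_antisymm ?_ (natDegree_minpoly_eq_seven hw ▸ minpoly.natDegree_le w)
  simpa [q7_monic.natDegree_map, q7_natDegree] using finrank_le_natDegree_of_adjoin_eq_top
    (q7_monic.map (algebraMap ℤ ℚ)).ne_zero (by rwa [aeval_map_algebraMap]) hgen

theorem norm_eq_of_aeval_q7 (hα : aeval α q7 = 0) (hgen : Algebra.adjoin ℚ {α} = ⊤)
    (hrank : finrank ℚ K = 7) : Algebra.norm ℚ α = 2832 := by
  have hαq : aeval α (q7.map (algebraMap ℤ ℚ)) = 0 := by rwa [aeval_map_algebraMap]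
  have hmin : minpoly ℚ α = q7.map (algebraMap ℤ ℚ) := minpoly_eq_of_adjoin_eq_top
    (q7_monic.map _) hαq hgen (by rw [q7_monic.natDegree_map, q7_natDegree, hrank])
  rw [Algebra.norm_eq_coeff_zero_minpoly_of_adjoin_eq_top (Algebra.IsIntegral.isIntegral α) hgen,
    hmin, q7_monic.natDegree_map, q7_natDegree]
  norm_num [q7]

theorem norm_eq_of_aeval_wMinpoly (hrank : finrank ℚ K = 7) (hw : aeval w wMinpoly = 0) :
    Algebra.norm ℚ w = -(2 ^ 7 * 3 * 3919 * 1941571 * 8583739212883) := by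
  have hdeg := natDegree_minpoly_eq_seven hw
  rw [Algebra.norm_eq_coeff_zero_minpoly_of_adjoin_eq_top (Algebra.IsIntegral.isIntegral w)
    (Algebra.adjoin_eq_top_of_natDegree_minpoly_eq_finrank (hdeg.trans hrank.symm)), hdeg,
    minpoly_eq_wMinpoly hw]
  norm_num [wMinpoly]

end NumberField

/-- Let `a ∈ 𝓞 K` be a root of
`q₇(x) = x⁷ − 30x⁶ + 357x⁵ − 2157x⁴ + 7034x³ − 12145x² + 9964x − 2832` generating
`K = ℚ(a)`, and let `w` be the explicitly given element of `K`.  Then `w` is an algebraic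
integer, `N_{K/ℚ}(w) = −2⁷ · 3 · 3919 · 1941571 · 8583739212883`, and the ideal `⟨3, w⟩`
of `𝓞 K` equals the prime ideal `⟨3, a⟩`, which has absolute norm `3`. -/
theorem stmt_13 (K : Type*) [Field K] [NumberField K] (a : 𝓞 K)
    (ha : a ^ 7 - 30 * a ^ 6 + 357 * a ^ 5 - 2157 * a ^ 4 + 7034 * a ^ 3 - 12145 * a ^ 2 +
      9964 * a - 2832 = 0)
    (hgen : Algebra.adjoin ℚ {algebraMap (𝓞 K) K a} = ⊤)
    (α : K) (hα : α = algebraMap (𝓞 K) K a)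
    (w : K)
    (hw : w = 134943/2 - 1626701/8 * α + 6689239/32 * α^2 - 2996715/32 * α^3 +
      80271/4 * α^4 - 64895/32 * α^5 + 2479/32 * α^6) :
    ∃ w0 : 𝓞 K, algebraMap (𝓞 K) K w0 = w ∧
      Algebra.norm ℚ w = -(2 ^ 7 * 3 * 3919 * 1941571 * 8583739212883 : ℚ) ∧
      Ideal.span {(3 : 𝓞 K), w0} = Ideal.span {(3 : 𝓞 K), a} ∧
      (Ideal.span {(3 : 𝓞 K), a}).IsPrime ∧
      Ideal.absNorm (Ideal.span {(3 : 𝓞 K), a}) = 3 := by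
  have haq : aeval a q7 = 0 := by
    simpa only [q7, map_add, map_sub, map_mul, map_pow, map_ofNat, aeval_X] using ha
  have hαq : aeval α q7 = 0 := by rw [hα, aeval_algebraMap_apply, haq, map_zero]
  have hwq : aeval w wMinpoly = 0 := aeval_wMinpoly_eq_zero hαq hw
  rw [← hα] at hgen
  have hrank := finrank_eq_seven hαq hgen hwq
  let w₀ : 𝓞 K := ⟨w, wMinpoly, wMinpoly_monic, hwq⟩
  have hw₀ : algebraMap (𝓞 K) K w₀ = w := rfl
  have h64 : 64 * w₀ = 4318176 - 13013608 * a + 13378478 * a ^ 2 - 5993430 * a ^ 3 +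
      1284336 * a ^ 4 - 129790 * a ^ 5 + 4958 * a ^ 6 := by
    refine FaithfulSMul.algebraMap_injective (𝓞 K) K ?_
    simp only [map_add, map_sub, map_mul, map_pow, map_ofNat, hw₀, ← hα]
    linear_combination (64 : K) * hw
  have hnorm : Algebra.norm ℤ a = 2832 := by
    exact_mod_cast (Algebra.coe_norm_int a).trans (hα ▸ norm_eq_of_aeval_q7 hαq hgen hrank)
  have habs : Ideal.absNorm (Ideal.span {(3 : 𝓞 K), a}) = 3 := by
    simpa using Ideal.absNorm_span_pair_eq_of_dvd_norm Nat.prime_three (a := a)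
      (by rw [hnorm]; norm_num) (by rw [hnorm]; norm_num)
  exact ⟨w₀, hw₀, norm_eq_of_aeval_wMinpoly hrank hwq, span_three_eq_of_sixtyFour_mul_eq ha h64,
    Ideal.isPrime_of_irreducible_absNorm (habs ▸ Nat.prime_three.prime.irreducible), habs⟩
end
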